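/- Let T, S ∈ B(X) with v(T)v(S) ≠ 0. Then T ∥_v S if and only if there exists a unimodular scalar λ such that T ⊥_{vB} (v(S)T + λ v(T)S). -/
import Mathlib


open Filter Topology

variable {𝕜 : Type*} [RCLike 𝕜] {X : Type*} [NormedAddCommGroup X] [NormedSpace 𝕜 X]

/-- The numerical radius of a bounded linear operator on a normed space:
`v(T) = sup {|x*(Tx)| : x ∈ S_X, x* ∈ J(x)}`. -/
noncomputable def nrad (T : X →L[𝕜] X) : ℝ :=
  sSup {r : ℝ | ∃ (x : X) (f : X →L[𝕜] 𝕜), ‖x‖ = 1 ∧ ‖f‖ = 1 ∧ f x = 1 ∧ r = ‖f (T x)‖}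

/-- Numerical radius parallelism: `T ∥_v S`. -/
def NRadParallel (T S : X →L[𝕜] X) : Prop :=
  ∃ lam : 𝕜, ‖lam‖ = 1 ∧ nrad (T + lam • S) = nrad T + nrad S

/-- Numerical radius Birkhoff orthogonality: `T ⊥_{vB} S`. -/
def NRadBirkhoff (T S : X →L[𝕜] X) : Prop :=
  ∀ α : 𝕜, nrad T ≤ nrad (T + α • S)

lemma nradSet_bddAbove (T : X →L[𝕜] X) :
    BddAbove {r : ℝ | ∃ (x : X) (f : X →L[𝕜] 𝕜), ‖x‖ = 1 ∧ ‖f‖ = 1 ∧ f x = 1 ∧ r = ‖f (T x)‖} := by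
  refine ⟨‖T‖, ?_⟩
  rintro r ⟨x, f, hx, hf, hfx, rfl⟩
  have h1 := f.le_opNorm (T x)
  have h2 := T.le_opNorm x
  rw [hf] at h1; rw [hx] at h2
  simpa using h1.trans (by simpa using h2)

lemma le_nrad (T : X →L[𝕜] X) {x : X} {f : X →L[𝕜] 𝕜}
    (hx : ‖x‖ = 1) (hf : ‖f‖ = 1) (hfx : f x = 1) : ‖f (T x)‖ ≤ nrad T :=
  le_csSup (nradSet_bddAbove T) ⟨x, f, hx, hf, hfx, rfl⟩

lemma nrad_nonneg (T : X →L[𝕜] X) : 0 ≤ nrad T := by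
  apply Real.sSup_nonneg
  rintro r ⟨x, f, hx, hf, hfx, rfl⟩
  exact norm_nonneg _

lemma nrad_le (T : X →L[𝕜] X) {M : ℝ} (hM : 0 ≤ M)
    (hb : ∀ (x : X) (f : X →L[𝕜] 𝕜), ‖x‖ = 1 → ‖f‖ = 1 → f x = 1 → ‖f (T x)‖ ≤ M) :
    nrad T ≤ M := by
  apply Real.sSup_le _ hM
  rintro r ⟨x, f, hx, hf, hfx, rfl⟩
  exact hb x f hx hf hfx

lemma nrad_add_le (T S : X →L[𝕜] X) : nrad (T + S) ≤ nrad T + nrad S := by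
  refine nrad_le _ (add_nonneg (nrad_nonneg T) (nrad_nonneg S)) fun x f hx hf hfx => ?_
  have h1 := le_nrad T hx hf hfx
  have h2 := le_nrad S hx hf hfx
  calc ‖f ((T + S) x)‖ = ‖f (T x) + f (S x)‖ := by simp
    _ ≤ ‖f (T x)‖ + ‖f (S x)‖ := norm_add_le _ _
    _ ≤ nrad T + nrad S := add_le_add h1 h2

lemma nrad_smul_le (c : 𝕜) (T : X →L[𝕜] X) : nrad (c • T) ≤ ‖c‖ * nrad T := by
  refine nrad_le _ (mul_nonneg (norm_nonneg c) (nrad_nonneg T)) fun x f hx hf hfx => ?_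
  have h1 := le_nrad T hx hf hfx
  calc ‖f ((c • T) x)‖ = ‖c‖ * ‖f (T x)‖ := by simp
    _ ≤ ‖c‖ * nrad T := by gcongr

lemma nrad_smul (c : 𝕜) (T : X →L[𝕜] X) : nrad (c • T) = ‖c‖ * nrad T := by
  rcases eq_or_ne c 0 with rfl | hc
  · simp only [zero_smul, norm_zero, zero_mul]
    exact le_antisymm (nrad_le _ le_rfl fun x f hx hf hfx => by simp) (nrad_nonneg _)
  · refine le_antisymm (nrad_smul_le c T) ?_
    have h := nrad_smul_le c⁻¹ (c • T)
    rw [smul_smul, inv_mul_cancel₀ hc, one_smul, norm_inv] at h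
    have hc' : 0 < ‖c‖ := norm_pos_iff.mpr hc
    calc ‖c‖ * nrad T ≤ ‖c‖ * (‖c‖⁻¹ * nrad (c • T)) := by gcongr
      _ = nrad (c • T) := by field_simp

lemma key_sq (r s : ℝ) (a b : 𝕜) :
    ‖(s : 𝕜) * a - (r : 𝕜) * b‖ ^ 2
      = s * (s + r) * ‖a‖ ^ 2 + r * (r + s) * ‖b‖ ^ 2 - r * s * ‖a + b‖ ^ 2 := by
  have h : ∀ z : 𝕜, ‖z‖ ^ 2 = RCLike.re z * RCLike.re z + RCLike.im z * RCLike.im z := by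
    intro z; rw [← RCLike.normSq_apply, RCLike.normSq_eq_def']
  rw [h, h, h, h]
  simp only [map_sub, map_add, RCLike.mul_re, RCLike.mul_im, RCLike.ofReal_re, RCLike.ofReal_im]
  ring

set_option maxHeartbeats 1000000 in
theorem stmt19 (T S : X →L[𝕜] X) (h : nrad T * nrad S ≠ 0) :
    NRadParallel T S ↔
      ∃ lam : 𝕜, ‖lam‖ = 1 ∧
        NRadBirkhoff T ((nrad S : 𝕜) • T + lam • (nrad T : 𝕜) • S) := by
  have hT' : 0 < nrad T := (nrad_nonneg T).lt_of_ne (Ne.symm (left_ne_zero_of_mul h))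
  have hS' : 0 < nrad S := (nrad_nonneg S).lt_of_ne (Ne.symm (right_ne_zero_of_mul h))
  -- there exists at least one admissible pair (x, f)
  have hne : ∃ (x : X) (f : X →L[𝕜] 𝕜), ‖x‖ = 1 ∧ ‖f‖ = 1 ∧ f x = 1 := by
    by_contra hcon
    push_neg at hcon
    refine absurd ?_ hT'.ne'
    have : {r : ℝ | ∃ (x : X) (f : X →L[𝕜] 𝕜), ‖x‖ = 1 ∧ ‖f‖ = 1 ∧ f x = 1 ∧ r = ‖f (T x)‖}
        = (∅ : Set ℝ) := by
      rw [Set.eq_empty_iff_forall_notMem]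
      rintro r ⟨x, f, hx, hf, hfx, _⟩
      exact hcon x f hx hf hfx
    rw [nrad, this, Real.sSup_empty]
  constructor
  · rintro ⟨μ, hμ, heq⟩
    refine ⟨-μ, by simpa using hμ, ?_⟩
    intro α
    set vT := nrad T with hvT
    set vS := nrad S with hvS
    set W : X →L[𝕜] X := (vS : 𝕜) • T + (-μ) • ((vT : 𝕜) • S) with hW
    refine le_of_forall_pos_le_add fun η hη => ?_
    set c : ℝ := 2 * vS * vT * (vT + vS) with hc
    have hcpos : 0 < c := by positivity
    set q : ℝ := η / (2 * (‖α‖ + 1)) with hqdef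
    have hq : 0 < q := by positivity
    set ε : ℝ := min (min (η / 2) vT) (q ^ 2 / c) with hεdef
    have hε : 0 < ε := lt_min (lt_min (by positivity) hT') (by positivity)
    have hεη : ε ≤ η / 2 := le_trans (min_le_left _ _) (min_le_left _ _)
    have hεT : ε ≤ vT := le_trans (min_le_left _ _) (min_le_right _ _)
    have hεq : ε ≤ q ^ 2 / c := min_le_right _ _
    -- the set for T + μ • S is nonempty
    obtain ⟨x₀, f₀, hx₀, hf₀, hfx₀⟩ := hne
    have hsetne : {r : ℝ | ∃ (x : X) (f : X →L[𝕜] 𝕜), ‖x‖ = 1 ∧ ‖f‖ = 1 ∧ f x = 1 ∧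
        r = ‖f ((T + μ • S) x)‖}.Nonempty := ⟨_, x₀, f₀, hx₀, hf₀, hfx₀, rfl⟩
    have hlt : nrad (T + μ • S) - ε < sSup {r : ℝ | ∃ (x : X) (f : X →L[𝕜] 𝕜),
        ‖x‖ = 1 ∧ ‖f‖ = 1 ∧ f x = 1 ∧ r = ‖f ((T + μ • S) x)‖} := by
      rw [← nrad]; linarith
    obtain ⟨r, ⟨x, f, hx, hf, hfx, rfl⟩, hr⟩ := exists_lt_of_lt_csSup hsetne hlt
    rw [heq] at hr
    set a : 𝕜 := f (T x) with ha'
    set b : 𝕜 := μ * f (S x) with hb'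
    have hab : f ((T + μ • S) x) = a + b := by
      simp [ha', hb', smul_eq_mul]
    rw [hab] at hr
    have ha : ‖a‖ ≤ vT := le_nrad T hx hf hfx
    have hb : ‖b‖ ≤ vS := by
      have h1 := le_nrad (μ • S) hx hf hfx
      rw [nrad_smul, hμ, one_mul] at h1
      simpa [hb', smul_eq_mul] using h1
    have hab2 : ‖a + b‖ ≤ ‖a‖ + ‖b‖ := norm_add_le _ _
    -- the key quantitative bound
    set z : 𝕜 := (vS : 𝕜) * a - (vT : 𝕜) * b with hz
    have hkey : ‖z‖ ^ 2 ≤ c * ε := by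
      rw [hz, key_sq]
      have h1 : ‖a‖ ^ 2 ≤ vT ^ 2 := pow_le_pow_left₀ (norm_nonneg a) ha 2
      have h2 : ‖b‖ ^ 2 ≤ vS ^ 2 := pow_le_pow_left₀ (norm_nonneg b) hb 2
      have h3 : (vT + vS - ε) ^ 2 ≤ ‖a + b‖ ^ 2 :=
        pow_le_pow_left₀ (by linarith) hr.le 2
      rw [hc]
      linarith [mul_le_mul_of_nonneg_left h1 (by positivity : (0:ℝ) ≤ vS * (vS + vT)),
        mul_le_mul_of_nonneg_left h2 (by positivity : (0:ℝ) ≤ vT * (vT + vS)),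
        mul_le_mul_of_nonneg_left h3 (by positivity : (0:ℝ) ≤ vT * vS),
        mul_nonneg (mul_nonneg hT'.le hS'.le) (sq_nonneg ε)]
    have hzq : ‖z‖ ≤ q := by
      have h1 : ‖z‖ ^ 2 ≤ q ^ 2 := by
        refine hkey.trans ?_
        calc c * ε ≤ c * (q ^ 2 / c) := by gcongr
          _ = q ^ 2 := by field_simp
      nlinarith [norm_nonneg z, hq.le]
    -- evaluate f at (T + α • W) x
    have hE : f ((T + α • W) x) = a + α * z := by
      simp only [hW, hz, ha', hb', ContinuousLinearMap.add_apply,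
        ContinuousLinearMap.smul_apply, map_add, map_smul, smul_eq_mul]
      ring
    have h4 : ‖a‖ ≤ ‖f ((T + α • W) x)‖ + ‖α‖ * ‖z‖ := by
      calc ‖a‖ = ‖(a + α * z) - α * z‖ := by ring_nf
        _ ≤ ‖a + α * z‖ + ‖α * z‖ := norm_sub_le _ _
        _ = ‖f ((T + α • W) x)‖ + ‖α‖ * ‖z‖ := by rw [hE, norm_mul]
    have h5 : ‖α‖ * ‖z‖ ≤ η / 2 := by
      calc ‖α‖ * ‖z‖ ≤ ‖α‖ * q := by gcongr
        _ ≤ η / 2 := by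
          rw [hqdef, ← mul_div_assoc, div_le_div_iff₀ (by positivity) (by norm_num : (0:ℝ) < 2)]
          nlinarith [norm_nonneg α, hη.le]
    have h6 := le_nrad (T + α • W) hx hf hfx
    linarith
  · rintro ⟨lam, hlam, hort⟩
    refine ⟨-lam, by simpa using hlam, ?_⟩
    set vT := nrad T with hvT
    set vS := nrad S with hvS
    have hvs : (0:ℝ) < vT + vS := by linarith
    have hα := hort (((-(1 / (vT + vS)) : ℝ)) : 𝕜)
    have hrw : T + (((-(1 / (vT + vS)) : ℝ)) : 𝕜) • ((vS : 𝕜) • T + lam • ((vT : 𝕜) • S))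
        = (((vT / (vT + vS) : ℝ)) : 𝕜) • (T + (-lam) • S) := by
      have hk : ((vS : 𝕜) + (vT : 𝕜)) ≠ 0 := by
        have h0 : ((vS + vT : ℝ) : 𝕜) ≠ 0 := by
          exact_mod_cast (by linarith : (0:ℝ) < vS + vT).ne'
        push_cast at h0; exact h0
      have hk' : ((vT : 𝕜) + (vS : 𝕜)) ≠ 0 := by rw [add_comm]; exact hk
      ext x
      simp only [ContinuousLinearMap.add_apply, ContinuousLinearMap.smul_apply, smul_smul]
      match_scalars <;> push_cast <;> field_simp [hk, hk'] <;> ring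
    rw [hrw, nrad_smul] at hα
    have hnorm : ‖(((vT / (vT + vS) : ℝ)) : 𝕜)‖ = vT / (vT + vS) := by
      rw [RCLike.norm_ofReal, abs_of_pos (by positivity)]
    rw [hnorm] at hα
    have hub : nrad (T + (-lam) • S) ≤ vT + vS := by
      have h1 := nrad_add_le T ((-lam) • S)
      have h2 : nrad ((-lam) • S) = vS := by
        rw [nrad_smul, norm_neg, hlam, one_mul]
      linarith
    have hlb : vT + vS ≤ nrad (T + (-lam) • S) := by
      by_contra hcon
      push_neg at hcon
      have : vT / (vT + vS) * nrad (T + (-lam) • S) < vT := by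
        rw [div_mul_eq_mul_div, div_lt_iff₀ hvs]
        nlinarith
      linarith
    linarith
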